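/- A vertex v of a graph G without isolated vertices satisfies γ(G − v) < γ(G) if and only if there exists a minimum dominating set D of G containing v whose private neighborhood satisfies PN[v,D] = {v}. -/

import Mathlib

open Finset

variable {V : Type} [Fintype V] [DecidableEq V]

def IsDomSet (G : SimpleGraph V) (D : Finset V) : Prop :=
  ∀ v : V, v ∉ D → ∃ u ∈ D, G.Adj u v

noncomputable def domNum (G : SimpleGraph V) : ℕ :=
  sInf {n | ∃ D : Finset V, IsDomSet G D ∧ D.card = n}

def IsVertexCover (G : SimpleGraph V) (C : Finset V) : Prop :=
  ∀ ⦃u v : V⦄, G.Adj u v → u ∈ C ∨ v ∈ C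

noncomputable def coverNum (G : SimpleGraph V) : ℕ :=
  sInf {n | ∃ C : Finset V, IsVertexCover G C ∧ C.card = n}

def IsIndepFinset (G : SimpleGraph V) (I : Finset V) : Prop :=
  ∀ u ∈ I, ∀ v ∈ I, ¬ G.Adj u v

noncomputable def indepNum (G : SimpleGraph V) : ℕ :=
  sSup {n | ∃ I : Finset V, IsIndepFinset G I ∧ I.card = n}

def IsLeaf (G : SimpleGraph V) [DecidableRel G.Adj] (v : V) : Prop :=
  G.degree v = 1

def IsSupport (G : SimpleGraph V) [DecidableRel G.Adj] (v : V) : Prop :=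
  ∃ u, G.Adj v u ∧ IsLeaf G u

def IsWeakSupport (G : SimpleGraph V) [DecidableRel G.Adj] (v : V) : Prop :=
  ((G.neighborFinset v).filter fun l => G.degree l = 1).card = 1

def IsBipartition (G : SimpleGraph V) (A B : Finset V) : Prop :=
  A ∪ B = Finset.univ ∧ Disjoint A B ∧
    ∀ ⦃u v : V⦄, G.Adj u v → (u ∈ A ∧ v ∈ B) ∨ (u ∈ B ∧ v ∈ A)

/-- The closed neighborhood of `v` as a `Finset`. -/
def closedNbhd (G : SimpleGraph V) [DecidableRel G.Adj] (v : V) : Finset V :=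
  insert v (G.neighborFinset v)

/-! If `γ(G - v) < γ(G)`, a minimum dominating set `D₀` of `G - v` cannot dominate `v`, for
otherwise it would dominate `G`; hence `D₀ ∪ {v}` is a minimum dominating set of `G` in which `v`
is its own only private neighbour. Conversely, if `PN[v, D] = {v}` then every neighbour of `v` is
dominated by `D - {v}`, which therefore dominates `G - v`. -/

theorem domNum_le_card {V : Type} {G : SimpleGraph V} {D : Finset V} (hD : IsDomSet G D) :
    domNum G ≤ #D :=
  Nat.sInf_le ⟨D, hD, rfl⟩

theorem exists_isDomSet_card_eq_domNum {V : Type} [Fintype V] (G : SimpleGraph V) :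
    ∃ D : Finset V, IsDomSet G D ∧ #D = domNum G :=
  Nat.sInf_mem (s := {n | ∃ D : Finset V, IsDomSet G D ∧ #D = n})
    ⟨#(univ : Finset V), univ, fun w hw => absurd (mem_univ w) hw, rfl⟩

section

variable {G : SimpleGraph V} [DecidableRel G.Adj]

theorem mem_closedNbhd {v w : V} : w ∈ closedNbhd G v ↔ w = v ∨ G.Adj v w := by
  rw [closedNbhd, mem_insert, SimpleGraph.mem_neighborFinset]

theorem mem_biUnion_closedNbhd {D : Finset V} {w : V} :
    w ∈ D.biUnion (closedNbhd G) ↔ w ∈ D ∨ ∃ u ∈ D, G.Adj u w := by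
  simp only [mem_biUnion, mem_closedNbhd]
  grind

theorem isDomSet_iff_forall_mem_biUnion_closedNbhd {D : Finset V} :
    IsDomSet G D ↔ ∀ w, w ∈ D.biUnion (closedNbhd G) := by
  simp only [mem_biUnion_closedNbhd, IsDomSet, or_iff_not_imp_left]

theorem closedNbhd_sdiff_eq_singleton_iff {v : V} {X : Finset V} :
    closedNbhd G v \ X = {v} ↔ v ∉ X ∧ ∀ w, G.Adj v w → w ∈ X := by
  simp only [Finset.ext_iff, mem_sdiff, mem_closedNbhd, mem_singleton]
  grind [SimpleGraph.Adj.ne]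

theorem isDomSet_induce_iff {S : Set V} (D : Finset S) :
    IsDomSet (G.induce S) D ↔
      ∀ w ∈ S, w ∈ (D.map (Function.Embedding.subtype _)).biUnion (closedNbhd G) := by
  simp only [IsDomSet, mem_biUnion_closedNbhd, or_iff_not_imp_left, Subtype.forall]
  exact forall₂_congr fun w hw => by simp [hw]

theorem domNum_induce_le_card {S : Set V} {D : Finset V} (hDS : ↑D ⊆ S)
    (hD : ∀ w ∈ S, w ∈ D.biUnion (closedNbhd G)) : domNum (G.induce S) ≤ #D := by
  classical
  have hmap : (D.subtype (· ∈ S)).map (Function.Embedding.subtype _) = D :=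
    subtype_map_of_mem hDS
  calc domNum (G.induce S) ≤ #(D.subtype (· ∈ S)) :=
        domNum_le_card ((isDomSet_induce_iff _).2 (by rwa [hmap]))
    _ = #D := by rw [← card_map (Function.Embedding.subtype _), hmap]

variable (G) in
theorem exists_card_eq_domNum_induce (S : Set V) :
    ∃ D : Finset V, ↑D ⊆ S ∧ (∀ w ∈ S, w ∈ D.biUnion (closedNbhd G)) ∧
      #D = domNum (G.induce S) := by
  classical
  obtain ⟨D, hD, hcard⟩ := exists_isDomSet_card_eq_domNum (G.induce S)
  refine ⟨D.map (Function.Embedding.subtype _), ?_, (isDomSet_induce_iff D).1 hD, ?_⟩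
  · simp
  · rw [card_map, hcard]

theorem exists_closedNbhd_sdiff_eq_singleton_of_domNum_lt {v : V}
    (h : domNum (G.induce ↑(univ.erase v)) < domNum G) :
    ∃ D : Finset V, IsDomSet G D ∧ #D = domNum G ∧ v ∈ D ∧
      closedNbhd G v \ (D.erase v).biUnion (closedNbhd G) = {v} := by
  obtain ⟨D₀, hD₀v, hD₀, hcard⟩ := exists_card_eq_domNum_induce G ↑(univ.erase v)
  have hvD₀ : v ∉ D₀ := fun hv => by simpa using hD₀v hv
  replace hD₀ : ∀ w ≠ v, w ∈ D₀.biUnion (closedNbhd G) := fun w hw => hD₀ w (by simpa using hw)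
  have hv : v ∉ D₀.biUnion (closedNbhd G) := by
    intro hv
    have hdom : IsDomSet G D₀ := isDomSet_iff_forall_mem_biUnion_closedNbhd.2 fun w =>
      if hw : w = v then hw ▸ hv else hD₀ w hw
    have := domNum_le_card hdom
    omega
  have hdom : IsDomSet G (insert v D₀) := isDomSet_iff_forall_mem_biUnion_closedNbhd.2 fun w => by
    rw [biUnion_insert, mem_union, mem_closedNbhd]
    exact (eq_or_ne w v).imp Or.inl (hD₀ w)
  refine ⟨insert v D₀, hdom, ?_, mem_insert_self v D₀, ?_⟩
  · have := domNum_le_card hdom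
    rw [card_insert_of_notMem hvD₀] at this ⊢
    omega
  · rw [erase_insert hvD₀, closedNbhd_sdiff_eq_singleton_iff]
    exact ⟨hv, fun w hw => hD₀ w hw.ne'⟩

theorem domNum_induce_erase_lt {v : V} {D : Finset V} (hD : IsDomSet G D) (hcard : #D = domNum G)
    (hv : v ∈ D) (hPN : closedNbhd G v \ (D.erase v).biUnion (closedNbhd G) = {v}) :
    domNum (G.induce ↑(univ.erase v)) < domNum G := by
  have hnbr := (closedNbhd_sdiff_eq_singleton_iff.1 hPN).2
  have hdom : ∀ w ∈ (↑(univ.erase v) : Set V), w ∈ (D.erase v).biUnion (closedNbhd G) := by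
    intro w hw
    have hwD := isDomSet_iff_forall_mem_biUnion_closedNbhd.1 hD w
    rw [← insert_erase hv, biUnion_insert, mem_union, mem_closedNbhd] at hwD
    exact hwD.elim (fun h => hnbr w (h.resolve_left (by simpa using hw))) id
  calc domNum (G.induce _) ≤ #(D.erase v) := domNum_induce_le_card (by simp) hdom
    _ < #D := card_erase_lt_of_mem hv
    _ = domNum G := hcard

end

theorem gamma_critical_iff_private_neighborhood_general (G : SimpleGraph V) [DecidableRel G.Adj]
    (v : V) :
    domNum (G.induce ↑(Finset.univ.erase v)) < domNum G ↔
      ∃ D : Finset V, IsDomSet G D ∧ D.card = domNum G ∧ v ∈ D ∧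
        closedNbhd G v \ (D.erase v).biUnion (fun u => closedNbhd G u) = {v} :=
  ⟨exists_closedNbhd_sdiff_eq_singleton_of_domNum_lt,
    fun ⟨_, hD, hcard, hv, hPN⟩ => domNum_induce_erase_lt hD hcard hv hPN⟩

theorem gamma_critical_iff_private_neighborhood (G : SimpleGraph V) [DecidableRel G.Adj]
    (hniso : ∀ u : V, 0 < G.degree u) (v : V) :
    domNum (G.induce ↑(Finset.univ.erase v)) < domNum G ↔
      ∃ D : Finset V, IsDomSet G D ∧ D.card = domNum G ∧ v ∈ D ∧
        closedNbhd G v \ (D.erase v).biUnion (fun u => closedNbhd G u) = {v} :=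
  gamma_critical_iff_private_neighborhood_general G v
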